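/- arXiv:1907.01604 — 2 statements merged into one kernel-verified Lean document; each statement's English description precedes it below -/
import Mathlib

section
/- All zeros of the paraorthogonal polynomial Φ_{n+1}^{(β)} are simple. -/
open Polynomial Real

/-- The reversed polynomial `Φ*` at level `n`: `Φ*(z) = z^n conj(Φ(1/conj z))`,
i.e. the coefficients are conjugated and reversed (with respect to degree `n`). -/
noncomputable def szegoRev (n : ℕ) (p : Polynomial ℂ) : Polynomial ℂ :=
  (p.map (starRingEnd ℂ)).reflect n

/-- The monic orthogonal polynomials on the unit circle obtained from the
Szegő recursion with Verblunsky coefficients `α`. -/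
noncomputable def szegoPoly (α : ℕ → ℂ) : ℕ → Polynomial ℂ
  | 0 => 1
  | n + 1 =>
    Polynomial.X * szegoPoly α n -
      Polynomial.C ((starRingEnd ℂ) (α n)) * szegoRev n (szegoPoly α n)

private lemma natDegree_reflect_le {q : Polynomial ℂ} {n : ℕ} (h : q.natDegree ≤ n) :
    (q.reflect n).natDegree ≤ n := by
  rw [natDegree_le_iff_coeff_eq_zero] at *
  intro m hm
  rw [coeff_reflect, revAt_eq_self_of_lt hm]
  exact h m hm

private lemma szegoRev_natDegree_le {p : Polynomial ℂ} {n : ℕ} (h : p.natDegree ≤ n) :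
    (szegoRev n p).natDegree ≤ n :=
  natDegree_reflect_le (le_trans natDegree_map_le h)

private lemma szegoPoly_natDegree_le (α : ℕ → ℂ) (n : ℕ) :
    (szegoPoly α n).natDegree ≤ n := by
  induction n with
  | zero => simp [szegoPoly]
  | succ n ih =>
    rw [szegoPoly]
    refine le_trans (natDegree_sub_le _ _) (max_le ?_ ?_)
    · exact le_trans (natDegree_mul_le) (by rw [natDegree_X]; omega)
    · exact le_trans (natDegree_mul_le) (by simpa using le_trans (szegoRev_natDegree_le ih) n.le_succ)

private lemma eval_reflect {q : Polynomial ℂ} {n : ℕ} (h : q.natDegree ≤ n) {z : ℂ}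
    (hz : z ≠ 0) : (q.reflect n).eval z = z ^ n * q.eval z⁻¹ := by
  letI : Invertible z⁻¹ := ⟨z, by field_simp, by field_simp⟩
  have := eval₂_reflect_mul_pow (RingHom.id ℂ) z⁻¹ n q h
  have hinv : (⅟ (z⁻¹) : ℂ) = z := rfl
  rw [hinv] at this
  have h1 : (q.reflect n).eval z * (z⁻¹) ^ n = q.eval z⁻¹ := this
  rw [← h1]
  rw [mul_left_comm, ← mul_pow, mul_inv_cancel₀ hz, one_pow, mul_one]

private lemma eval_szegoRev {p : Polynomial ℂ} {n : ℕ} (h : p.natDegree ≤ n) {z : ℂ}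
    (hz : z ≠ 0) :
    (szegoRev n p).eval z = z ^ n * (starRingEnd ℂ) (p.eval ((starRingEnd ℂ) z)⁻¹) := by
  rw [szegoRev, eval_reflect (le_trans natDegree_map_le h) hz]
  congr 1
  have : z⁻¹ = (starRingEnd ℂ) (((starRingEnd ℂ) z)⁻¹) := by
    rw [map_inv₀, Complex.conj_conj]
  rw [this, eval_map, eval₂_at_apply]

private lemma eval_szegoRev_circle {p : Polynomial ℂ} {n : ℕ} (h : p.natDegree ≤ n) {z : ℂ}
    (hz : ‖z‖ = 1) :
    (szegoRev n p).eval z = z ^ n * (starRingEnd ℂ) (p.eval z) := by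
  have hz0 : z ≠ 0 := by intro h0; simp [h0] at hz
  rw [eval_szegoRev h hz0]
  have hc : ((starRingEnd ℂ) z)⁻¹ = z := by
    refine inv_eq_of_mul_eq_one_right ?_
    rw [← Complex.normSq_eq_conj_mul_self, Complex.normSq_eq_norm_sq, hz]
    norm_num
  rw [hc]

private lemma szegoRev_succ (α : ℕ → ℂ) (n : ℕ) :
    szegoRev (n + 1) (szegoPoly α (n + 1)) =
      szegoRev n (szegoPoly α n) - Polynomial.C (α n) * (Polynomial.X * szegoPoly α n) := by
  apply eq_of_infinite_eval_eq
  apply Set.Infinite.mono (s := {(0:ℂ)}ᶜ)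
  swap
  · exact Set.Finite.infinite_compl (Set.finite_singleton 0)
  intro z hz
  simp only [Set.mem_compl_iff, Set.mem_singleton_iff] at hz
  simp only [Set.mem_setOf_eq]
  have hy : ((starRingEnd ℂ) z)⁻¹ ≠ 0 := by simpa using hz
  have hyc : ((starRingEnd ℂ) (((starRingEnd ℂ) z)⁻¹))⁻¹ = z := by
    rw [map_inv₀, Complex.conj_conj, inv_inv]
  rw [eval_szegoRev (szegoPoly_natDegree_le α (n+1)) hz]
  conv_lhs => rw [szegoPoly]
  rw [eval_sub, eval_mul, eval_mul, eval_C, eval_X,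
    eval_szegoRev (szegoPoly_natDegree_le α n) hy, hyc]
  rw [eval_sub, eval_mul, eval_mul, eval_C, eval_X,
    eval_szegoRev (szegoPoly_natDegree_le α n) hz]
  simp only [map_sub, map_mul, map_pow, Complex.conj_conj, map_inv₀]
  have hzn : z ^ n * z⁻¹ ^ n = 1 := by rw [← mul_pow, mul_inv_cancel₀ hz, one_pow]
  field_simp
  linear_combination (-(z^2 * α n * eval z (szegoPoly α n))) * hzn

private lemma X_mul_derivative_reflect (n : ℕ) :
    ∀ q : Polynomial ℂ, q.natDegree ≤ n →
      Polynomial.X * Polynomial.derivative (q.reflect n) =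
        Polynomial.C (n : ℂ) * q.reflect n - (Polynomial.derivative q).reflect (n - 1) := by
  refine induction_with_natDegree_le _ n ?_ ?_ ?_
  · simp
  · intro k r _ hk
    rcases Nat.eq_zero_or_pos k with hk0 | hk0
    · subst hk0
      rcases Nat.eq_zero_or_pos n with hn0 | hn0
      · subst hn0; simp
      · rw [pow_zero, mul_one, reflect_C, derivative_C, reflect_zero, sub_zero,
          derivative_C_mul, derivative_X_pow]
        have : Polynomial.X * (Polynomial.C r * (Polynomial.C (n : ℂ) * Polynomial.X ^ (n - 1)))
            = Polynomial.C (n : ℂ) * Polynomial.C r * (Polynomial.X ^ (n - 1) * Polynomial.X) := by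
          ring
        rw [this, ← pow_succ, Nat.sub_add_cancel hn0]
        ring
    · rw [reflect_C_mul, reflect_monomial, revAt_le hk, derivative_C_mul, derivative_X_pow,
        derivative_C_mul, derivative_X_pow, reflect_C_mul, reflect_C_mul, reflect_monomial,
        revAt_le (by omega : k - 1 ≤ n - 1)]
      have e1 : n - 1 - (k - 1) = n - k := by omega
      rw [e1]
      rcases lt_or_eq_of_le hk with hlt | rfl
      · have h2 : n - k - 1 + 1 = n - k := by omega
        have hn_eq : (Polynomial.C (n : ℂ) : Polynomial ℂ)
            = Polynomial.C ((n - k : ℕ) : ℂ) + Polynomial.C ((k : ℕ) : ℂ) := by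
          rw [← Polynomial.C_add]
          congr 1
          have : ((n - k : ℕ) : ℂ) + ((k : ℕ) : ℂ) = (((n - k) + k : ℕ) : ℂ) := by push_cast; ring
          rw [this, Nat.sub_add_cancel hk]
        have hp : (Polynomial.X : Polynomial ℂ) ^ (n - k) = Polynomial.X ^ (n - k - 1) * Polynomial.X := by
          rw [← pow_succ, h2]
        rw [hn_eq, hp]
        ring
      · simp only [Nat.sub_self, Nat.cast_zero, pow_zero, Polynomial.C_0]
        ring
  · intro f g _ hg hf' hg'
    simp only [derivative_add, reflect_add, mul_add, hf', hg']
    ring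

private lemma X_mul_derivative_szegoRev {p : Polynomial ℂ} {n : ℕ} (h : p.natDegree ≤ n) :
    Polynomial.X * Polynomial.derivative (szegoRev n p) =
      Polynomial.C (n : ℂ) * szegoRev n p - szegoRev (n - 1) (Polynomial.derivative p) := by
  have := X_mul_derivative_reflect n (p.map (starRingEnd ℂ)) (le_trans natDegree_map_le h)
  rw [szegoRev, szegoRev, this, derivative_map]

private lemma circle_mul_conj {z : ℂ} (hz : ‖z‖ = 1) :
    z * (starRingEnd ℂ) z = 1 := by
  rw [Complex.mul_conj, Complex.normSq_eq_norm_sq, hz]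
  norm_num

private lemma eval_derivative_szegoRev (α : ℕ → ℂ) (n : ℕ) {z : ℂ}
    (hz : ‖z‖ = 1) :
    (Polynomial.derivative (szegoRev n (szegoPoly α n))).eval z =
      (n : ℂ) * z ^ n * (starRingEnd ℂ) z * (starRingEnd ℂ) ((szegoPoly α n).eval z) -
        z ^ n * ((starRingEnd ℂ) z) ^ 2 *
          (starRingEnd ℂ) ((Polynomial.derivative (szegoPoly α n)).eval z) := by
  have hz0 : z ≠ 0 := by intro h0; simp [h0] at hz
  have hzc := circle_mul_conj hz
  have key := congrArg (Polynomial.eval z) (X_mul_derivative_szegoRev (szegoPoly_natDegree_le α n))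
  rw [eval_mul, eval_X, eval_sub, eval_mul, eval_C,
    eval_szegoRev_circle (szegoPoly_natDegree_le α n) hz,
    eval_szegoRev_circle (n := n - 1) (p := Polynomial.derivative (szegoPoly α n))
      (le_trans (natDegree_derivative_le _) (Nat.sub_le_sub_right (szegoPoly_natDegree_le α n) 1)) hz]
    at key
  -- key : z * D' = n * (z^n * conj a) - z^(n-1) * conj b
  have hD : (Polynomial.derivative (szegoRev n (szegoPoly α n))).eval z
      = (starRingEnd ℂ) z * ((n : ℂ) * (z ^ n * (starRingEnd ℂ) ((szegoPoly α n).eval z))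
          - z ^ (n - 1) * (starRingEnd ℂ) ((Polynomial.derivative (szegoPoly α n)).eval z)) := by
    rw [← key]
    calc (Polynomial.derivative (szegoRev n (szegoPoly α n))).eval z
        = ((starRingEnd ℂ) z * z) * (Polynomial.derivative (szegoRev n (szegoPoly α n))).eval z := by
          rw [mul_comm ((starRingEnd ℂ) z) z, hzc, one_mul]
      _ = (starRingEnd ℂ) z * (z * (Polynomial.derivative (szegoRev n (szegoPoly α n))).eval z) := by
          ring
  rw [hD]
  rcases Nat.eq_zero_or_pos n with hn0 | hn0
  · subst hn0
    simp [szegoPoly]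
  · have hpow : z ^ (n - 1) = z ^ n * (starRingEnd ℂ) z := by
      have : z ^ n = z ^ (n - 1) * z := by rw [← pow_succ, Nat.sub_add_cancel hn0]
      rw [this, mul_assoc, hzc, mul_one]
    rw [hpow]
    ring

private lemma rev_dominates (α : ℕ → ℂ) (hα : ∀ j, ‖α j‖ < 1) (n : ℕ) :
    ∀ z : ℂ, ‖z‖ ≤ 1 →
      ‖(szegoPoly α n).eval z‖ ≤
          ‖(szegoRev n (szegoPoly α n)).eval z‖ ∧
        (szegoRev n (szegoPoly α n)).eval z ≠ 0 := by
  induction n with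
  | zero =>
    intro z hz
    simp [szegoPoly, szegoRev, reflect_one]
  | succ n ih =>
    intro z hz
    obtain ⟨ih1, ih2⟩ := ih z hz
    set a := (szegoPoly α n).eval z with ha
    set s := (szegoRev n (szegoPoly α n)).eval z with hs
    set γ := α n with hγ
    have E1 : (szegoPoly α (n + 1)).eval z = z * a - (starRingEnd ℂ) γ * s := by
      rw [szegoPoly]; simp [ha, hs, hγ]
    have E2 : (szegoRev (n + 1) (szegoPoly α (n + 1))).eval z = s - γ * (z * a) := by
      rw [szegoRev_succ]; simp [ha, hs, hγ]
    have hC : (s - γ*(z*a)) * (starRingEnd ℂ) (s - γ*(z*a))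
        - (z*a - (starRingEnd ℂ) γ * s) * (starRingEnd ℂ) (z*a - (starRingEnd ℂ) γ * s)
        = (1 - γ * (starRingEnd ℂ) γ)
            * (s * (starRingEnd ℂ) s - (z*a) * (starRingEnd ℂ) (z*a)) := by
      simp only [map_sub, map_mul, Complex.conj_conj]; ring
    simp only [Complex.mul_conj] at hC
    have hkey : Complex.normSq (s - γ*(z*a)) - Complex.normSq (z*a - (starRingEnd ℂ) γ * s)
        = (1 - Complex.normSq γ) * (Complex.normSq s - Complex.normSq (z*a)) := by
      exact_mod_cast hC
    have hγ1 : Complex.normSq γ < 1 := by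
      rw [Complex.normSq_eq_norm_sq]
      nlinarith [hα n, norm_nonneg γ]
    have hz1 : Complex.normSq z ≤ 1 := by
      rw [Complex.normSq_eq_norm_sq]
      nlinarith [norm_nonneg z]
    have hna : Complex.normSq a ≤ Complex.normSq s := by
      rw [Complex.normSq_eq_norm_sq, Complex.normSq_eq_norm_sq]
      exact pow_le_pow_left₀ (norm_nonneg a) ih1 2
    have hnza : Complex.normSq (z*a) ≤ Complex.normSq s := by
      rw [Complex.normSq_mul]
      nlinarith [Complex.normSq_nonneg a, Complex.normSq_nonneg z]
    constructor
    · rw [E1, E2, Complex.norm_def, Complex.norm_def]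
      apply Real.sqrt_le_sqrt
      nlinarith [Complex.normSq_nonneg (z*a)]
    · rw [E2]
      intro h0
      have hseq : s = γ * (z * a) := by linear_combination h0
      have habs : ‖s‖ = ‖γ‖ * (‖z‖ * ‖a‖) := by
        rw [hseq]; simp [map_mul]
      have hspos : 0 < ‖s‖ := norm_pos_iff.mpr ih2
      have h1 : ‖z‖ * ‖a‖ ≤ ‖s‖ :=
        le_trans (by nlinarith [norm_nonneg a]) ih1
      have h2 : ‖s‖ ≤ ‖γ‖ * ‖s‖ := by
        rw [habs]; nlinarith [norm_nonneg γ]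
      nlinarith [mul_lt_mul_of_pos_right (hα n) hspos]

private lemma zeros_on_circle (α : ℕ → ℂ) (hα : ∀ j, ‖α j‖ < 1) (n : ℕ)
    (β : ℂ) (hβ : ‖β‖ = 1) {z : ℂ}
    (hz : (Polynomial.X * szegoPoly α n -
        Polynomial.C ((starRingEnd ℂ) β) * szegoRev n (szegoPoly α n)).eval z = 0) :
    ‖z‖ = 1 := by
  set a := (szegoPoly α n).eval z with ha
  set s := (szegoRev n (szegoPoly α n)).eval z with hs
  have heq : z * a = (starRingEnd ℂ) β * s := by
    simp only [eval_sub, eval_mul, eval_X, eval_C] at hz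
    linear_combination hz
  have habs : ‖z‖ * ‖a‖ = ‖s‖ := by
    have := congrArg (‖·‖) heq
    simpa [map_mul, Complex.norm_conj, hβ] using this
  rcases le_or_gt (‖z‖) 1 with hle | hgt
  · obtain ⟨h1, h2⟩ := rev_dominates α hα n z hle
    have hspos : 0 < ‖s‖ := norm_pos_iff.mpr h2
    refine le_antisymm hle ?_
    by_contra hlt
    push_neg at hlt
    have : ‖s‖ < ‖s‖ := by
      calc ‖s‖ = ‖z‖ * ‖a‖ := habs.symm
        _ ≤ ‖z‖ * ‖s‖ := by
            nlinarith [norm_nonneg z]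
        _ < 1 * ‖s‖ := by
            apply mul_lt_mul_of_pos_right hlt hspos
        _ = ‖s‖ := one_mul _
    exact absurd this (lt_irrefl _)
  · exfalso
    have hz0 : z ≠ 0 := by
      intro h0; rw [h0] at hgt; norm_num at hgt
    set y := ((starRingEnd ℂ) z)⁻¹ with hy
    have hy0 : y ≠ 0 := by simpa [hy] using hz0
    have hyabs : ‖y‖ = (‖z‖)⁻¹ := by
      rw [hy, norm_inv, Complex.norm_conj]
    have hyle : ‖y‖ ≤ 1 := by
      rw [hyabs]
      rw [inv_le_one_iff₀]
      right; exact hgt.le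
    obtain ⟨g1, g2⟩ := rev_dominates α hα n y hyle
    have hycy : ((starRingEnd ℂ) y)⁻¹ = z := by
      rw [hy, map_inv₀, Complex.conj_conj, inv_inv]
    have hSy : (szegoRev n (szegoPoly α n)).eval y
        = y ^ n * (starRingEnd ℂ) a := by
      rw [eval_szegoRev (szegoPoly_natDegree_le α n) hy0, hycy]
    have hane : a ≠ 0 := by
      intro h0
      rw [h0] at hSy
      simp at hSy
      exact g2 hSy
    have hsz : s = z ^ n * (starRingEnd ℂ) ((szegoPoly α n).eval y) := by
      rw [hs, eval_szegoRev (szegoPoly_natDegree_le α n) hz0]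
    have hsabs : ‖s‖ ≤ ‖a‖ := by
      have h1 : ‖s‖ = ‖z‖ ^ n * ‖(szegoPoly α n).eval y‖ := by
        rw [hsz]; simp [map_mul, map_pow, Complex.norm_conj]
      have h2 : ‖(szegoPoly α n).eval y‖ ≤ ‖y‖ ^ n * ‖a‖ := by
        calc ‖(szegoPoly α n).eval y‖
            ≤ ‖(szegoRev n (szegoPoly α n)).eval y‖ := g1
          _ = ‖y‖ ^ n * ‖a‖ := by
              rw [hSy]; simp [map_mul, map_pow, Complex.norm_conj]
      have h3 : ‖z‖ ^ n * ‖y‖ ^ n = 1 := by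
        rw [hyabs, ← mul_pow, mul_inv_cancel₀ (by positivity : ‖z‖ ≠ 0), one_pow]
      calc ‖s‖ = ‖z‖ ^ n * ‖(szegoPoly α n).eval y‖ := h1
        _ ≤ ‖z‖ ^ n * (‖y‖ ^ n * ‖a‖) := by
            apply mul_le_mul_of_nonneg_left h2 (by positivity)
        _ = (‖z‖ ^ n * ‖y‖ ^ n) * ‖a‖ := by ring
        _ = ‖a‖ := by rw [h3, one_mul]
    have hapos : 0 < ‖a‖ := norm_pos_iff.mpr hane
    nlinarith [habs, hsabs]

private lemma keyF (n : ℕ) (z a b g : ℂ) (hz : ‖z‖ = 1) :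
    2 * (z * (a + z*b - g*((n:ℂ)*z^n*((starRingEnd ℂ) z)*(starRingEnd ℂ) a
          - z^n*((starRingEnd ℂ) z)^2*(starRingEnd ℂ) b))
        * (starRingEnd ℂ) (z*a - g*(z^n*(starRingEnd ℂ) a))).re
      - ((n:ℝ)+1) * Complex.normSq (z*a - g*(z^n*(starRingEnd ℂ) a))
    = (1 - Complex.normSq g) * (2*(z*b*(starRingEnd ℂ) a).re - ((n:ℝ)-1) * Complex.normSq a) := by
  set D := a + z*b - g*((n:ℂ)*z^n*((starRingEnd ℂ) z)*(starRingEnd ℂ) a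
      - z^n*((starRingEnd ℂ) z)^2*(starRingEnd ℂ) b) with hD
  set Cc := z*a - g*(z^n*(starRingEnd ℂ) a) with hCc
  have H : z*D*(starRingEnd ℂ) Cc + (starRingEnd ℂ) (z*D*(starRingEnd ℂ) Cc)
        - ((n:ℂ)+1) * (Cc * (starRingEnd ℂ) Cc)
      = (1 - g * (starRingEnd ℂ) g)
          * ((z*b*(starRingEnd ℂ) a + (starRingEnd ℂ) (z*b*(starRingEnd ℂ) a))
            - ((n:ℂ)-1)*(a*(starRingEnd ℂ) a)) := by
    rw [hD, hCc]
    simp only [map_mul, map_add, map_sub, map_pow, Complex.conj_conj, map_natCast, map_one,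
      map_ofNat]
    set w := (starRingEnd ℂ) z with hwd
    set A := (starRingEnd ℂ) a with hAd
    set B := (starRingEnd ℂ) b with hBd
    set G := (starRingEnd ℂ) g with hGd
    have hzw : z * w = 1 := circle_mul_conj hz
    have hZW : z^n * w^n = 1 := by rw [← mul_pow, hzw, one_pow]
    linear_combination (a*A - a*A*(n:ℂ) + 2*(z^n)*(w^n)*a*A*g*G*(n:ℂ) + w*a*B
        - w*(z^n)*A^2*g*(n:ℂ) - w*(z^n)*(w^n)*a*B*g*G + w^2*(z^n)*A*B*g + z*A*b
        - z*(w^n)*a^2*G*(n:ℂ) - z*(z^n)*(w^n)*A*b*g*G + z^2*(w^n)*a*b*G) * hzw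
      + (-(a*A*g*G) + a*A*g*G*(n:ℂ) - w*a*B*g*G - z*A*b*g*G) * hZW
  rw [Complex.add_conj, Complex.add_conj, Complex.mul_conj, Complex.mul_conj,
    Complex.mul_conj] at H
  push_cast at H
  apply Complex.ofReal_injective
  push_cast
  linear_combination H

private lemma eval_succ_poly (α : ℕ → ℂ) (n : ℕ) {z : ℂ} (hz : ‖z‖ = 1) :
    (szegoPoly α (n + 1)).eval z =
      z * (szegoPoly α n).eval z -
        (starRingEnd ℂ) (α n) * (z ^ n * (starRingEnd ℂ) ((szegoPoly α n).eval z)) := by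
  rw [szegoPoly, eval_sub, eval_mul, eval_mul, eval_C, eval_X,
    eval_szegoRev_circle (szegoPoly_natDegree_le α n) hz]

private lemma eval_succ_deriv (α : ℕ → ℂ) (n : ℕ) {z : ℂ} (hz : ‖z‖ = 1) :
    (Polynomial.derivative (szegoPoly α (n + 1))).eval z =
      (szegoPoly α n).eval z + z * (Polynomial.derivative (szegoPoly α n)).eval z -
        (starRingEnd ℂ) (α n) *
          ((n : ℂ) * z ^ n * (starRingEnd ℂ) z * (starRingEnd ℂ) ((szegoPoly α n).eval z) -
            z ^ n * ((starRingEnd ℂ) z) ^ 2 *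
              (starRingEnd ℂ) ((Polynomial.derivative (szegoPoly α n)).eval z)) := by
  rw [szegoPoly, derivative_sub, derivative_mul, derivative_mul, derivative_X, derivative_C]
  simp only [eval_sub, eval_add, eval_mul, eval_one, eval_X, eval_C, eval_zero, zero_mul,
    zero_add, one_mul]
  rw [eval_derivative_szegoRev α n hz]

private lemma T_invariant (α : ℕ → ℂ) (hα : ∀ j, ‖α j‖ < 1) (n : ℕ) :
    ∀ z : ℂ, ‖z‖ = 1 →
      (n : ℝ) * Complex.normSq ((szegoPoly α n).eval z) ≤
        2 * (z * (Polynomial.derivative (szegoPoly α n)).eval z *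
          (starRingEnd ℂ) ((szegoPoly α n).eval z)).re := by
  induction n with
  | zero => intro z hz; simp [szegoPoly]
  | succ n ih =>
    intro z hz
    have IH := ih z hz
    set a := (szegoPoly α n).eval z with ha
    set b := (Polynomial.derivative (szegoPoly α n)).eval z with hb
    have hF := keyF n z a b ((starRingEnd ℂ) (α n)) hz
    rw [eval_succ_poly α n hz, eval_succ_deriv α n hz, ← ha, ← hb]
    rw [Complex.normSq_conj] at hF
    have hγ1 : Complex.normSq (α n) < 1 := by
      rw [Complex.normSq_eq_norm_sq]
      nlinarith [hα n, norm_nonneg (α n)]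
    push_cast
    nlinarith [Complex.normSq_nonneg a, hF, IH, hγ1]


theorem stmt11 (α : ℕ → ℂ) (hα : ∀ j, ‖α j‖ < 1) (n : ℕ)
    (β : ℂ) (hβ : ‖β‖ = 1) :
    ∀ z : ℂ,
      (Polynomial.X * szegoPoly α n -
          Polynomial.C ((starRingEnd ℂ) β) * szegoRev n (szegoPoly α n)).eval z = 0 →
      (Polynomial.derivative
          (Polynomial.X * szegoPoly α n -
            Polynomial.C ((starRingEnd ℂ) β) * szegoRev n (szegoPoly α n))).eval z ≠ 0 := by
  intro z hP hP'
  have hz : ‖z‖ = 1 := zeros_on_circle α hα n β hβ hP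
  have hzw : z * (starRingEnd ℂ) z = 1 := circle_mul_conj hz
  set a := (szegoPoly α n).eval z with ha
  set b := (Polynomial.derivative (szegoPoly α n)).eval z with hb
  -- a ≠ 0
  have hane : a ≠ 0 := by
    obtain ⟨-, h2⟩ := rev_dominates α hα n z hz.le
    rw [eval_szegoRev_circle (szegoPoly_natDegree_le α n) hz] at h2
    intro h0
    rw [← ha, h0] at h2
    simp at h2
  -- equations from the hypotheses
  have h1 : z * a - (starRingEnd ℂ) β * (z ^ n * (starRingEnd ℂ) a) = 0 := by
    rw [eval_sub, eval_mul, eval_mul, eval_C, eval_X,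
      eval_szegoRev_circle (szegoPoly_natDegree_le α n) hz] at hP
    rw [← ha] at hP
    linear_combination hP
  have h2 : a + z * b - (starRingEnd ℂ) β *
      ((n : ℂ) * z ^ n * (starRingEnd ℂ) z * (starRingEnd ℂ) a -
        z ^ n * ((starRingEnd ℂ) z) ^ 2 * (starRingEnd ℂ) b) = 0 := by
    rw [derivative_sub, derivative_mul, derivative_mul, derivative_X, derivative_C] at hP'
    simp only [eval_sub, eval_add, eval_mul, eval_one, eval_X, eval_C, eval_zero, zero_mul,
      zero_add, one_mul] at hP'
    rw [eval_derivative_szegoRev α n hz, ← ha, ← hb] at hP'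
    linear_combination hP'
  -- derive the real equation
  have eq3 : z * b * (starRingEnd ℂ) a + (starRingEnd ℂ) (z * b * (starRingEnd ℂ) a)
      = ((n : ℂ) - 1) * (a * (starRingEnd ℂ) a) := by
    simp only [map_mul, Complex.conj_conj]
    set w := (starRingEnd ℂ) z with hwd
    set A := (starRingEnd ℂ) a with hAd
    set B := (starRingEnd ℂ) b with hBd
    linear_combination (z * w * A) * h2 + (-(z * ((n:ℂ) * w^2 * A - w^3 * B))) * h1
      + (-(a*A) + a*A*(n:ℂ) - w*a*B - z*A*b + z*w*a*A*(n:ℂ) - z*w^2*a*B) * hzw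
  rw [Complex.add_conj, Complex.mul_conj] at eq3
  push_cast at eq3
  have eq3r : 2 * (z * b * (starRingEnd ℂ) a).re = ((n : ℝ) - 1) * Complex.normSq a := by
    apply Complex.ofReal_injective
    push_cast
    linear_combination eq3
  have hT := T_invariant α hα n z hz
  rw [← ha, ← hb] at hT
  have hpos : 0 < Complex.normSq a := by
    exact Complex.normSq_pos.mpr hane
  nlinarith [hT, eq3r, hpos]
end

section
/- With the Prüfer phase η_n as above, for any real numbers λ ≤ τ: η_n(τ) - η_n(λ) ≤ (n+1)(τ - λ) + 2π·Σ_{j=0}^{n-1} |α_j|. -/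
open Polynomial Real

lemma abs_arg_one_sub_le (w : ℂ) (hw : ‖w‖ < 1) :
    |Complex.arg (1 - w)| ≤ π / 2 * ‖w‖ := by
  set z : ℂ := 1 - w with hz
  have hre : 0 < z.re := by
    have h1 : w.re ≤ ‖w‖ := Complex.re_le_norm w
    simp only [hz, Complex.sub_re, Complex.one_re]
    linarith
  have hzne : z ≠ 0 := by intro h0; rw [h0] at hre; simp at hre
  have habsz : 0 < ‖z‖ := norm_pos_iff.mpr hzne
  have hπ := Real.pi_pos
  have harg : |z.arg| < π / 2 := Complex.abs_arg_lt_pi_div_two_iff.mpr (Or.inl hre)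
  have hkey : |z.im| ≤ ‖w‖ * ‖z‖ := by
    have hsq : z.im ^ 2 ≤ (‖w‖ * ‖z‖) ^ 2 := by
      have h1 : (‖w‖) ^ 2 = w.re ^ 2 + w.im ^ 2 := by
        rw [Complex.sq_norm, Complex.normSq_apply]; ring
      have h2 : (‖z‖) ^ 2 = (1 - w.re) ^ 2 + w.im ^ 2 := by
        rw [Complex.sq_norm, Complex.normSq_apply, hz]
        simp [Complex.sub_re, Complex.sub_im]; ring
      have h3 : z.im = -w.im := by simp [hz, Complex.sub_im]
      rw [h3, mul_pow, h1, h2]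
      nlinarith [sq_nonneg (w.re - (w.re ^ 2 + w.im ^ 2))]
    calc |z.im| = Real.sqrt (z.im ^ 2) := (Real.sqrt_sq_eq_abs _).symm
      _ ≤ Real.sqrt ((‖w‖ * ‖z‖) ^ 2) := Real.sqrt_le_sqrt hsq
      _ = ‖w‖ * ‖z‖ := Real.sqrt_sq (by positivity)
  have h3 : Real.sin |z.arg| = |Real.sin z.arg| := by
    rcases le_or_gt 0 z.arg with hc | hc
    · rw [abs_of_nonneg hc,
        abs_of_nonneg (Real.sin_nonneg_of_nonneg_of_le_pi hc (Complex.arg_le_pi z))]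
    · rw [abs_of_neg hc, Real.sin_neg,
        abs_of_nonpos (Real.sin_nonpos_of_nonpos_of_neg_pi_le hc.le (Complex.neg_pi_lt_arg z).le)]
  have hsin : Real.sin |z.arg| ≤ ‖w‖ := by
    rw [h3, Complex.sin_arg, abs_div, abs_of_pos habsz, div_le_iff₀ habsz]
    exact hkey
  have hjordan := Real.mul_le_sin (abs_nonneg z.arg) harg.le
  calc |z.arg| = π / 2 * (2 / π * |z.arg|) := by field_simp
    _ ≤ π / 2 * ‖w‖ :=
      mul_le_mul_of_nonneg_left (hjordan.trans hsin) (by positivity)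

/-- The Prüfer phase: `η_0(θ) = θ` and
`η_{n+1}(θ) = η_n(θ) + θ - 2 arg(1 - α_n e^{i η_n(θ)})`, with `arg ∈ (-π, π]`. -/
noncomputable def prufer (α : ℕ → ℂ) : ℕ → ℝ → ℝ
  | 0, θ => θ
  | n + 1, θ =>
    prufer α n θ + θ -
      2 * Complex.arg (1 - α n * Complex.exp ((prufer α n θ : ℂ) * Complex.I))

theorem stmt15 (α : ℕ → ℂ) (hα : ∀ j, ‖α j‖ < 1) (n : ℕ)
    (lam tau : ℝ) (h : lam ≤ tau) :
    prufer α n tau - prufer α n lam ≤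
      ((n : ℝ) + 1) * (tau - lam) +
        2 * π * ∑ j ∈ Finset.range n, ‖α j‖ := by
  induction n with
  | zero =>
    simp only [prufer, Nat.cast_zero, Finset.range_zero, Finset.sum_empty, mul_zero, add_zero]
    linarith
  | succ n ih =>
    have hexp : ∀ θ : ℝ, ‖α n * Complex.exp ((θ : ℂ) * Complex.I)‖
        = ‖α n‖ := by
      intro θ
      rw [norm_mul, Complex.norm_exp_ofReal_mul_I, mul_one]
    have hA := abs_arg_one_sub_le (α n * Complex.exp ((prufer α n tau : ℂ) * Complex.I))
      (by rw [hexp]; exact hα n)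
    have hB := abs_arg_one_sub_le (α n * Complex.exp ((prufer α n lam : ℂ) * Complex.I))
      (by rw [hexp]; exact hα n)
    rw [hexp] at hA hB
    have hA' := abs_le.mp hA
    have hB' := abs_le.mp hB
    rw [Finset.sum_range_succ]
    simp only [prufer]
    push_cast
    linarith [hA'.1, hA'.2, hB'.1, hB'.2]
end
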